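/- Let α be a type of data points, C a type of labels, L : α → C a labeling function, D a finite nonempty set of elements of α, and IsNew_L the label-induced oracle. Then for every k with 1 ≤ k ≤ |D| there exists a sequence ⟨d₁,…,dₖ⟩ of elements of D with AggWasted(⟨d₁,…,dₖ⟩) = 0, where wasted opportunities are computed with respect to candidates drawn from D; that is, under the label-induced oracle a perfect (zero-wastage) ordered diversity sample of any length up to |D| always exists. -/

import Mathlib

open scoped Classical

/-- The label-induced oracle: on a nonempty sequence `⟨d₁,…,dₖ⟩` it returns
`0` if `L dₖ = L dᵢ` for some `i < k`, and `1` otherwise. -/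
noncomputable def isNewL {α C : Type*} (L : α → C) (l : List α) : ℕ :=
  match l.reverse with
  | [] => 1
  | d :: rest => if ∃ x ∈ rest, L d = L x then 0 else 1

/-- `Wasted(⟨d₁,…,dₖ⟩) = 1` iff `IsNew(⟨d₁,…,dₖ⟩) = 0` and there exists `d ∈ D`
with `IsNew(⟨d₁,…,d_{k−1},d⟩) = 1`; otherwise it is `0`. -/
noncomputable def wasted {α : Type*} (isNew : List α → ℕ) (D : Finset α) (l : List α) : ℕ :=
  if isNew l = 0 ∧ ∃ d ∈ D, isNew (l.dropLast ++ [d]) = 1 then 1 else 0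

/-- `AggWasted(⟨d₁,…,dₖ⟩) = Σ_{i=1}^{k} Wasted(⟨d₁,…,dᵢ⟩)`. -/
noncomputable def aggWasted {α : Type*} (isNew : List α → ℕ) (D : Finset α) (l : List α) : ℕ :=
  ∑ i ∈ Finset.range l.length, wasted isNew D (l.take (i + 1))

/- A sample that first runs through one representative of every label of `D` and then lists the
remaining points of `D` in any order wastes nothing: every pick of the first phase has a fresh
label, and once all labels have been seen no candidate of `D` is new, so a repeated label is
no longer a missed opportunity. Zero wastage passes to prefixes, which handles every `k`. -/

section Wastage

variable {α C : Type*}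

lemma isNewL_append_singleton (L : α → C) (xs : List α) (d : α) :
    isNewL L (xs ++ [d]) = if ∃ x ∈ xs, L d = L x then 0 else 1 := by
  simp [isNewL]

lemma wasted_isNewL_append_singleton_of_forall_ne (L : α → C) (D : Finset α)
    {xs : List α} {d : α} (hfresh : ∀ x ∈ xs, L d ≠ L x) :
    wasted (isNewL L) D (xs ++ [d]) = 0 := by
  have hnew : isNewL L (xs ++ [d]) = 1 := by
    rw [isNewL_append_singleton, if_neg]
    rintro ⟨x, hx, hLx⟩
    exact hfresh x hx hLx
  simp [wasted, hnew]

lemma wasted_isNewL_append_singleton_of_covers (L : α → C) (D : Finset α)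
    {xs : List α} (hcover : ∀ d ∈ D, ∃ x ∈ xs, L d = L x) (d : α) :
    wasted (isNewL L) D (xs ++ [d]) = 0 := by
  have hold : ∀ d' ∈ D, isNewL L (xs ++ [d']) = 0 := fun d' hd' => by
    rw [isNewL_append_singleton, if_pos (hcover d' hd')]
  simp +contextual [wasted, hold]

lemma aggWasted_append_singleton (isNew : List α → ℕ) (D : Finset α) (l : List α) (d : α) :
    aggWasted isNew D (l ++ [d]) = aggWasted isNew D l + wasted isNew D (l ++ [d]) := by
  unfold aggWasted
  rw [List.length_append, List.length_singleton, Finset.sum_range_succ,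
    List.take_of_length_le (by simp)]
  congr 1
  refine Finset.sum_congr rfl fun i hi => ?_
  rw [List.take_append_of_le_length (Finset.mem_range.mp hi)]

lemma aggWasted_take_of_eq_zero {isNew : List α → ℕ} {D : Finset α} {l : List α}
    (h : aggWasted isNew D l = 0) (k : ℕ) : aggWasted isNew D (l.take k) = 0 := by
  unfold aggWasted at h ⊢
  rw [Finset.sum_eq_zero_iff] at h
  refine Finset.sum_eq_zero fun i hi => ?_
  rw [Finset.mem_range, List.length_take, lt_min_iff] at hi
  rw [List.take_take, min_eq_left (by omega)]
  exact h i (Finset.mem_range.mpr hi.2)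

lemma aggWasted_isNewL_eq_zero_of_nodup_map (L : α → C) (D : Finset α) {l : List α}
    (hl : (l.map L).Nodup) : aggWasted (isNewL L) D l = 0 := by
  induction l using List.reverseRecOn with
  | nil => rfl
  | append_singleton xs d ih =>
    rw [List.map_append, List.nodup_append] at hl
    rw [aggWasted_append_singleton, ih hl.1, zero_add]
    refine wasted_isNewL_append_singleton_of_forall_ne L D fun x hx hLx => ?_
    exact hl.2.2 _ (List.mem_map_of_mem hx) _ (List.mem_singleton_self _) hLx.symm

lemma aggWasted_isNewL_append_eq_zero_of_covers (L : α → C) (D : Finset α) {xs : List α}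
    (hxs : aggWasted (isNewL L) D xs = 0) (hcover : ∀ d ∈ D, ∃ x ∈ xs, L d = L x)
    (ys : List α) : aggWasted (isNewL L) D (xs ++ ys) = 0 := by
  induction ys using List.reverseRecOn with
  | nil => rwa [List.append_nil]
  | append_singleton ys d ih =>
    rw [← List.append_assoc, aggWasted_append_singleton, ih, zero_add]
    refine wasted_isNewL_append_singleton_of_covers L D (fun d' hd' => ?_) d
    obtain ⟨x, hx, hLx⟩ := hcover d' hd'
    exact ⟨x, List.mem_append_left _ hx, hLx⟩

end Wastage

lemma Finset.exists_subset_injOn_image_eq_image {α C : Type*} [DecidableEq C] (L : α → C)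
    (D : Finset α) : ∃ R ⊆ D, Set.InjOn L R ∧ R.image L = D.image L := by
  obtain ⟨R, hRD, hinj, himg⟩ := Finset.exists_subset_injOn_image_eq_of_surjOn (D : Set α)
    (D.image L) (by rw [Finset.coe_image]; exact Set.surjOn_image L D)
  exact ⟨R, Finset.coe_subset.mp hRD, hinj, himg⟩

lemma exists_length_eq_card_aggWasted_isNewL_eq_zero {α C : Type*} (L : α → C) (D : Finset α) :
    ∃ l : List α, l.length = D.card ∧ (∀ d ∈ l, d ∈ D) ∧ aggWasted (isNewL L) D l = 0 := by
  obtain ⟨R, hRD, hinj, himg⟩ := Finset.exists_subset_injOn_image_eq_image L D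
  have hnodup : (R.toList.map L).Nodup :=
    R.nodup_toList.map_on fun x hx y hy => hinj (by simpa using hx) (by simpa using hy)
  have hcover : ∀ d ∈ D, ∃ x ∈ R.toList, L d = L x := fun d hd => by
    obtain ⟨x, hx, hLx⟩ := Finset.mem_image.mp (himg ▸ Finset.mem_image_of_mem L hd)
    exact ⟨x, Finset.mem_toList.mpr hx, hLx.symm⟩
  refine ⟨R.toList ++ (D \ R).toList, ?_, fun d hd => ?_, ?_⟩
  · rw [List.length_append, Finset.length_toList, Finset.length_toList, add_comm]
    exact Finset.card_sdiff_add_card_eq_card hRD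
  · rcases List.mem_append.mp hd with h | h
    · exact hRD (Finset.mem_toList.mp h)
    · exact (Finset.mem_sdiff.mp (Finset.mem_toList.mp h)).1
  · exact aggWasted_isNewL_append_eq_zero_of_covers L D
      (aggWasted_isNewL_eq_zero_of_nodup_map L D hnodup) hcover _

theorem exists_zero_wastage_sample_general {α C : Type*}
    (L : α → C) (D : Finset α) :
    ∀ k : ℕ, 1 ≤ k → k ≤ D.card →
      ∃ l : List α, l.length = k ∧ (∀ d ∈ l, d ∈ D) ∧
        aggWasted (isNewL L) D l = 0 := by
  intro k _ hk
  obtain ⟨l, hlen, hmem, hzero⟩ := exists_length_eq_card_aggWasted_isNewL_eq_zero L D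
  exact ⟨l.take k, by simp [hlen, hk], fun d hd => hmem d (List.mem_of_mem_take hd),
    aggWasted_take_of_eq_zero hzero k⟩

/-- Under the label-induced oracle, for every `k` with `1 ≤ k ≤ |D|` there is a
sequence of `k` elements of `D` whose aggregated wasted opportunity is `0`:
a perfect zero-wastage ordered diversity sample of any length up to `|D|`
always exists. -/
theorem exists_zero_wastage_sample {α C : Type*}
    (L : α → C) (D : Finset α) (hD : D.Nonempty) :
    ∀ k : ℕ, 1 ≤ k → k ≤ D.card →
      ∃ l : List α, l.length = k ∧ (∀ d ∈ l, d ∈ D) ∧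
        aggWasted (isNewL L) D l = 0 :=
  exists_zero_wastage_sample_general L D
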